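/- arXiv:1702.04065 — 4 statements merged into one kernel-verified Lean document; each statement's English description precedes it below -/
import Mathlib

section
/- Let n ≥ 1 and let ≺ be a total order on the vertex set {1,…,n} of the path graph A_n. Call ≺ an eliminating order if for every vertex v the set v⁺ = {w : v ≺ w and |v−w| = 1} of future neighbours of v is a complete subset of A_n (i.e., any two distinct elements of v⁺ are adjacent in A_n). Then ≺ is an eliminating order if and only if there exists M ∈ {1,…,n} such that 1 ≺ 2 ≺ ⋯ ≺ M and n ≺ n−1 ≺ ⋯ ≺ M (i.e., ≺ is an intertwining of these two chains with common maximal element M). Moreover, there are exactly 2^{n−1} eliminating orders on A_n. -/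
noncomputable section

/-- Adjacency in the path graph `A_n` (vertices are `Fin n`): `v ~ w` iff `|v - w| = 1`. -/
def pathAdj (n : ℕ) (v w : Fin n) : Prop :=
  (v : ℕ) + 1 = (w : ℕ) ∨ (w : ℕ) + 1 = (v : ℕ)

/-- A total (strict) order on the vertices of `A_n` is encoded by a permutation `e`,
where `e` maps a position (rank) to a vertex, so that `v ≺ w ↔ e.symm v < e.symm w`.
The order is eliminating iff for every vertex `v` the set of its future neighbours
`v⁺ = {w | v ≺ w ∧ v ~ w}` is complete in `A_n`. -/
def IsElim {n : ℕ} (e : Equiv.Perm (Fin n)) : Prop :=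
  ∀ v w₁ w₂ : Fin n, e.symm v < e.symm w₁ → pathAdj n v w₁ →
    e.symm v < e.symm w₂ → pathAdj n v w₂ → w₁ ≠ w₂ → pathAdj n w₁ w₂

namespace Stmt0Aux

variable {n : ℕ}

lemma rhs_imp_elim (e : Equiv.Perm (Fin n)) (M : Fin n)
    (hl : ∀ i j : Fin n, i < j → j ≤ M → e.symm i < e.symm j)
    (hr : ∀ i j : Fin n, M ≤ i → i < j → e.symm j < e.symm i) : IsElim e := by
  intro v w₁ w₂ h1 p1 h2 p2 hne
  exfalso
  have key : ∀ a b : Fin n, (a : ℕ) + 1 = (v : ℕ) → (v : ℕ) + 1 = (b : ℕ) →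
      e.symm v < e.symm a → e.symm v < e.symm b → False := by
    intro a b ha hb hra hrb
    rcases lt_or_ge (v : ℕ) (M : ℕ) with h | h
    · have : e.symm a < e.symm v :=
        hl a v (by rw [Fin.lt_def]; omega) (by rw [Fin.le_def]; omega)
      exact absurd hra this.asymm
    · have : e.symm b < e.symm v :=
        hr v b (by rw [Fin.le_def]; omega) (by rw [Fin.lt_def]; omega)
      exact absurd hrb this.asymm
  rcases p1 with p1 | p1 <;> rcases p2 with p2 | p2
  · exact hne (Fin.ext (by omega))
  · exact key w₂ w₁ p2 p1 h2 h1
  · exact key w₁ w₂ p1 p2 h1 h2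
  · exact hne (Fin.ext (by omega))

/-- the minimal-rank vertex of a nonempty "interval" has a neighbour of smaller rank,
unless it is a boundary of the interval; we use it via argmin contradictions. -/
lemma step_aux (hn : 1 ≤ n) (e : Equiv.Perm (Fin n)) (he : IsElim e)
    (w₀ : Fin n) (h1 : 1 ≤ (w₀ : ℕ)) (h2 : (w₀ : ℕ) + 1 < n)
    (a c : Fin n) (ha : (a : ℕ) = (w₀ : ℕ) - 1) (hc : (c : ℕ) = (w₀ : ℕ) + 1)
    (hra : e.symm w₀ < e.symm a) (hrc : e.symm w₀ < e.symm c) : False := by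
  have hpa : pathAdj n w₀ a := Or.inr (by omega)
  have hpc : pathAdj n w₀ c := Or.inl (by omega)
  have hac : a ≠ c := by intro h; rw [h] at ha; omega
  rcases he w₀ a c hra hpa hrc hpc hac with h | h <;> omega

lemma elim_imp_rhs (hn : 1 ≤ n) (e : Equiv.Perm (Fin n)) (he : IsElim e) :
    ∃ M : Fin n,
      (∀ i j : Fin n, i < j → j ≤ M → e.symm i < e.symm j) ∧
      (∀ i j : Fin n, M ≤ i → i < j → e.symm j < e.symm i) := by
  obtain ⟨L, hL⟩ : ∃ L : Fin n, (L : ℕ) = n - 1 := ⟨⟨n - 1, by omega⟩, rfl⟩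
  refine ⟨e L, ?_, ?_⟩ <;>
  · have hML : e.symm (e L) = L := e.symm_apply_apply L
    have hMv : (e.symm (e L) : ℕ) = n - 1 := by rw [hML, hL]
    have hrle : ∀ w : Fin n, (e.symm w : ℕ) ≤ n - 1 := fun w => by
      have := (e.symm w).isLt; omega
    have hLne : ∀ w : Fin n, (w : ℕ) ≠ ((e L : Fin n) : ℕ) → (e.symm w : ℕ) < n - 1 := by
      intro w hw
      rcases lt_or_eq_of_le (hrle w) with h | h
      · exact h
      · exfalso; apply hw
        have hwL : e.symm w = L := Fin.ext (by rw [hL]; exact h)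
        have : w = e L := by
          have := congrArg e hwL; simpa using this
        rw [this]
    have stepL : ∀ v : ℕ, (hv : v + 1 < n) → v + 1 ≤ ((e L : Fin n) : ℕ) →
        e.symm ⟨v, by omega⟩ < e.symm ⟨v + 1, hv⟩ := by
      intro v hv hvM
      by_contra hcon
      push_neg at hcon
      obtain ⟨v0, hv0⟩ : ∃ v0 : Fin n, (v0 : ℕ) = v := ⟨⟨v, by omega⟩, rfl⟩
      obtain ⟨v1, hv1⟩ : ∃ v1 : Fin n, (v1 : ℕ) = v + 1 := ⟨⟨v + 1, hv⟩, rfl⟩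
      have hv0e : (⟨v, by omega⟩ : Fin n) = v0 := Fin.ext hv0.symm
      have hv1e : (⟨v + 1, hv⟩ : Fin n) = v1 := Fin.ext hv1.symm
      rw [hv0e, hv1e] at hcon
      have hcon' : (e.symm v1 : ℕ) ≤ (e.symm v0 : ℕ) := Fin.le_def.mp hcon
      have hmemv1 : v1 ∈ Finset.univ.filter
          (fun w : Fin n => v + 1 ≤ (w : ℕ) ∧ (w : ℕ) ≤ ((e L : Fin n) : ℕ)) :=
        Finset.mem_filter.mpr ⟨Finset.mem_univ _, by omega⟩
      obtain ⟨w₀, hw₀S, hmin⟩ := Finset.exists_min_image _ (fun w => e.symm w) ⟨_, hmemv1⟩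
      obtain ⟨-, h1, h2⟩ := Finset.mem_filter.mp hw₀S
      have hrv1 : (e.symm w₀ : ℕ) ≤ (e.symm v1 : ℕ) := Fin.le_def.mp (hmin _ hmemv1)
      have hvlt : (e.symm v0 : ℕ) < n - 1 := hLne _ (by omega)
      have hw₀M : (w₀ : ℕ) < ((e L : Fin n) : ℕ) := by
        rcases lt_or_eq_of_le h2 with h | h
        · exact h
        · exfalso
          have : e.symm w₀ = e.symm (e L) := by rw [Fin.ext h]
          have h3 : (e.symm w₀ : ℕ) = n - 1 := by rw [this, hMv]
          omega
      obtain ⟨a, ha⟩ : ∃ a : Fin n, (a : ℕ) = (w₀ : ℕ) - 1 := ⟨⟨_, by omega⟩, rfl⟩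
      obtain ⟨c, hc⟩ : ∃ c : Fin n, (c : ℕ) = (w₀ : ℕ) + 1 :=
        ⟨⟨_, by have := (e L : Fin n).isLt; omega⟩, rfl⟩
      have hcS : c ∈ Finset.univ.filter
          (fun w : Fin n => v + 1 ≤ (w : ℕ) ∧ (w : ℕ) ≤ ((e L : Fin n) : ℕ)) :=
        Finset.mem_filter.mpr ⟨Finset.mem_univ c, by omega⟩
      have hrc : e.symm w₀ < e.symm c := by
        refine lt_of_le_of_ne (hmin c hcS) (fun h => ?_)
        have := congrArg Fin.val (e.symm.injective h)
        omega
      have hra : e.symm w₀ < e.symm a := by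
        have hle : (e.symm w₀ : ℕ) ≤ (e.symm a : ℕ) := by
          rcases eq_or_lt_of_le h1 with h | h
          · have hav : a = v0 := Fin.ext (by omega)
            rw [hav]; omega
          · exact Fin.le_def.mp (hmin a (Finset.mem_filter.mpr ⟨Finset.mem_univ _, by omega⟩))
        refine lt_of_le_of_ne (Fin.le_def.mpr hle) (fun h => ?_)
        have := congrArg Fin.val (e.symm.injective h)
        omega
      exact step_aux hn e he w₀ (by omega) (by have := (e L : Fin n).isLt; omega) a c ha hc hra hrc
    have stepR : ∀ v : ℕ, (hv : v + 1 < n) → ((e L : Fin n) : ℕ) ≤ v →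
        e.symm ⟨v + 1, hv⟩ < e.symm ⟨v, by omega⟩ := by
      intro v hv hvM
      by_contra hcon
      push_neg at hcon
      obtain ⟨v0, hv0⟩ : ∃ v0 : Fin n, (v0 : ℕ) = v := ⟨⟨v, by omega⟩, rfl⟩
      obtain ⟨v1, hv1⟩ : ∃ v1 : Fin n, (v1 : ℕ) = v + 1 := ⟨⟨v + 1, hv⟩, rfl⟩
      have hv0e : (⟨v, by omega⟩ : Fin n) = v0 := Fin.ext hv0.symm
      have hv1e : (⟨v + 1, hv⟩ : Fin n) = v1 := Fin.ext hv1.symm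
      rw [hv0e, hv1e] at hcon
      have hcon' : (e.symm v0 : ℕ) ≤ (e.symm v1 : ℕ) := Fin.le_def.mp hcon
      have hmemv0 : v0 ∈ Finset.univ.filter
          (fun w : Fin n => ((e L : Fin n) : ℕ) ≤ (w : ℕ) ∧ (w : ℕ) ≤ v) :=
        Finset.mem_filter.mpr ⟨Finset.mem_univ _, by omega⟩
      obtain ⟨w₀, hw₀S, hmin⟩ := Finset.exists_min_image _ (fun w => e.symm w) ⟨_, hmemv0⟩
      obtain ⟨-, h1, h2⟩ := Finset.mem_filter.mp hw₀S
      have hrv0 : (e.symm w₀ : ℕ) ≤ (e.symm v0 : ℕ) := Fin.le_def.mp (hmin _ hmemv0)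
      have hv1lt : (e.symm v1 : ℕ) < n - 1 := hLne _ (by omega)
      have hw₀M : ((e L : Fin n) : ℕ) < (w₀ : ℕ) := by
        rcases lt_or_eq_of_le h1 with h | h
        · exact h
        · exfalso
          have : e.symm w₀ = e.symm (e L) := by rw [Fin.ext h.symm]
          have h3 : (e.symm w₀ : ℕ) = n - 1 := by rw [this, hMv]
          omega
      obtain ⟨a, ha⟩ : ∃ a : Fin n, (a : ℕ) = (w₀ : ℕ) - 1 := ⟨⟨_, by omega⟩, rfl⟩
      obtain ⟨c, hc⟩ : ∃ c : Fin n, (c : ℕ) = (w₀ : ℕ) + 1 := ⟨⟨_, by omega⟩, rfl⟩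
      have haS : a ∈ Finset.univ.filter
          (fun w : Fin n => ((e L : Fin n) : ℕ) ≤ (w : ℕ) ∧ (w : ℕ) ≤ v) :=
        Finset.mem_filter.mpr ⟨Finset.mem_univ a, by omega⟩
      have hra : e.symm w₀ < e.symm a := by
        refine lt_of_le_of_ne (hmin a haS) (fun h => ?_)
        have := congrArg Fin.val (e.symm.injective h)
        omega
      have hrc : e.symm w₀ < e.symm c := by
        have hle : (e.symm w₀ : ℕ) ≤ (e.symm c : ℕ) := by
          rcases eq_or_lt_of_le h2 with h | h
          · have hcv : c = v1 := Fin.ext (by omega)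
            rw [hcv]; omega
          · exact Fin.le_def.mp (hmin c (Finset.mem_filter.mpr ⟨Finset.mem_univ _, by omega⟩))
        refine lt_of_le_of_ne (Fin.le_def.mpr hle) (fun h => ?_)
        have := congrArg Fin.val (e.symm.injective h)
        omega
      exact step_aux hn e he w₀ (by omega) (by omega) a c ha hc hra hrc
    have chainL : ∀ d : ℕ, ∀ v : ℕ, (hv : v + d + 1 < n) → v + d + 1 ≤ ((e L : Fin n) : ℕ) →
        e.symm ⟨v, by omega⟩ < e.symm ⟨v + d + 1, hv⟩ := by
      intro d
      induction d with
      | zero => intro v hv h; exact stepL v hv h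
      | succ d ih =>
          intro v hv h
          exact lt_trans (ih v (by omega) (by omega)) (stepL (v + d + 1) (by omega) (by omega))
    have chainR : ∀ d : ℕ, ∀ v : ℕ, (hv : v + d + 1 < n) → ((e L : Fin n) : ℕ) ≤ v →
        e.symm ⟨v + d + 1, hv⟩ < e.symm ⟨v, by omega⟩ := by
      intro d
      induction d with
      | zero => intro v hv h; exact stepR v hv h
      | succ d ih =>
          intro v hv h
          exact lt_trans (stepR (v + d + 1) (by omega) (by omega)) (ih v (by omega) (by omega))
    first
    | · intro i j hij hjM
        have hij' := Fin.lt_def.mp hij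
        have hjM' := Fin.le_def.mp hjM
        have h := chainL ((j : ℕ) - (i : ℕ) - 1) (i : ℕ) (by have := j.isLt; omega) (by omega)
        have e1 : (⟨(i : ℕ), by omega⟩ : Fin n) = i := Fin.ext rfl
        have e2 : (⟨(i : ℕ) + ((j : ℕ) - (i : ℕ) - 1) + 1, by have := j.isLt; omega⟩ : Fin n) = j :=
          Fin.ext (show (i : ℕ) + ((j : ℕ) - (i : ℕ) - 1) + 1 = (j : ℕ) by omega)
        rwa [e1, e2] at h
    | · intro i j hMi hij
        have hij' := Fin.lt_def.mp hij
        have hMi' := Fin.le_def.mp hMi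
        have h := chainR ((j : ℕ) - (i : ℕ) - 1) (i : ℕ) (by have := j.isLt; omega) (by omega)
        have e1 : (⟨(i : ℕ), by omega⟩ : Fin n) = i := Fin.ext rfl
        have e2 : (⟨(i : ℕ) + ((j : ℕ) - (i : ℕ) - 1) + 1, by have := j.isLt; omega⟩ : Fin n) = j :=
          Fin.ext (show (i : ℕ) + ((j : ℕ) - (i : ℕ) - 1) + 1 = (j : ℕ) by omega)
        rwa [e1, e2] at h



/-- count of `i < k` with `B i = t`. -/
def cntB (B : ℕ → Bool) (t : Bool) (k : ℕ) : ℕ :=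
  ((Finset.range k).filter (fun i => B i = t)).card

lemma cntB_succ (B : ℕ → Bool) (t : Bool) (k : ℕ) :
    cntB B t (k + 1) = cntB B t k + (if B k = t then 1 else 0) := by
  rw [cntB, Finset.range_add_one, Finset.filter_insert]
  split
  · rw [Finset.card_insert_of_notMem (by simp)]; simp [cntB]
  · simp [cntB]

lemma cntB_mono (B : ℕ → Bool) (t : Bool) {k k' : ℕ} (h : k ≤ k') :
    cntB B t k ≤ cntB B t k' :=
  Finset.card_le_card (Finset.filter_subset_filter _ (Finset.range_subset_range.mpr h))

lemma cntB_le (B : ℕ → Bool) (t : Bool) (k : ℕ) : cntB B t k ≤ k :=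
  le_trans (Finset.card_filter_le _ _) (le_of_eq (Finset.card_range k))

lemma cntB_add (B : ℕ → Bool) (k : ℕ) : cntB B true k + cntB B false k = k := by
  induction k with
  | zero => simp [cntB]
  | succ k ih =>
      rw [cntB_succ, cntB_succ]
      cases hB : B k <;> simp [hB] <;> omega

lemma cntB_strict (B : ℕ → Bool) (t : Bool) {k k' : ℕ} (hk : B k = t) (h : k < k') :
    cntB B t k + 1 ≤ cntB B t k' := by
  have h1 : cntB B t (k + 1) = cntB B t k + 1 := by rw [cntB_succ, if_pos hk]
  have h2 := cntB_mono B t (show k + 1 ≤ k' from h)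
  omega

variable {n : ℕ}

/-- extension of `b : Fin n → Bool` to `ℕ`. -/
def extB (b : Fin n → Bool) : ℕ → Bool := fun i => if h : i < n then b ⟨i, h⟩ else true

lemma extB_val (b : Fin n → Bool) (a : Fin n) : extB b (a : ℕ) = b a := by
  simp [extB, a.isLt]

lemma cnt_eq_card (b : Fin n → Bool) (t : Bool) (k : ℕ) (hk : k ≤ n) :
    cntB (extB b) t k =
      (Finset.univ.filter (fun i : Fin n => (i : ℕ) < k ∧ b i = t)).card := by
  rw [cntB]
  have himg : (Finset.range k).filter (fun i => extB b i = t) =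
      (Finset.univ.filter (fun i : Fin n => (i : ℕ) < k ∧ b i = t)).image Fin.val := by
    ext i
    simp only [Finset.mem_filter, Finset.mem_range, Finset.mem_image, Finset.mem_univ, true_and]
    constructor
    · rintro ⟨hik, hB⟩
      have hin : i < n := lt_of_lt_of_le hik hk
      refine ⟨⟨i, hin⟩, ⟨hik, ?_⟩, rfl⟩
      rw [← extB_val b ⟨i, hin⟩]; exact hB
    · rintro ⟨a, ⟨hak, hba⟩, rfl⟩
      exact ⟨hak, by rw [extB_val]; exact hba⟩
  rw [himg, Finset.card_image_of_injective _ Fin.val_injective]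

lemma card_val_lt (v : ℕ) (hv : v ≤ n) :
    (Finset.univ.filter (fun w : Fin n => (w : ℕ) < v)).card = v := by
  have h := cnt_eq_card (fun _ : Fin n => true) true v hv
  have h2 : cntB (extB (fun _ : Fin n => true)) true v = v := by
    rw [cntB]
    have : (Finset.range v).filter (fun i => extB (fun _ : Fin n => true) i = true)
        = Finset.range v := by
      apply Finset.filter_true_of_mem
      intro i hi
      simp only [Finset.mem_range] at hi
      simp [extB, lt_of_lt_of_le hi hv]
    rw [this, Finset.card_range]
  have h3 : (Finset.univ.filter (fun i : Fin n => (i : ℕ) < v ∧ (fun _ : Fin n => true) i = true))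
      = Finset.univ.filter (fun w : Fin n => (w : ℕ) < v) := by
    apply Finset.filter_congr; intro w _; simp
  rw [h3] at h
  rw [← h]; exact h2

lemma card_val_gt (v : ℕ) (hv : v < n) :
    (Finset.univ.filter (fun w : Fin n => v < (w : ℕ))).card = n - 1 - v := by
  have hpart := Finset.card_filter_add_card_filter_not
    (s := (Finset.univ : Finset (Fin n))) (p := fun w : Fin n => (w : ℕ) < v + 1)
  have h1 : (Finset.univ.filter (fun w : Fin n => (w : ℕ) < v + 1)).card = v + 1 :=
    card_val_lt (v + 1) (by omega)
  have h2 : (Finset.univ.filter (fun w : Fin n => ¬ (w : ℕ) < v + 1)) =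
      (Finset.univ.filter (fun w : Fin n => v < (w : ℕ))) := by
    apply Finset.filter_congr; intro w _; constructor <;> intro <;> omega
  rw [h1, h2] at hpart
  simp only [Finset.card_univ, Fintype.card_fin] at hpart
  omega


/-- read off the permutation (rank ↦ vertex) from the bits. -/
def fb (b : Fin n → Bool) (k : Fin n) : Fin n :=
  if b k then ⟨cntB (extB b) true (k : ℕ), lt_of_le_of_lt (cntB_le _ _ _) k.isLt⟩
  else ⟨n - 1 - cntB (extB b) false (k : ℕ), by have := k.pos; omega⟩

lemma fb_true_val (b : Fin n → Bool) (k : Fin n) (h : b k = true) :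
    (fb b k : ℕ) = cntB (extB b) true (k : ℕ) := by simp [fb, h]

lemma fb_false_val (b : Fin n → Bool) (k : Fin n) (h : b k = false) :
    (fb b k : ℕ) = n - 1 - cntB (extB b) false (k : ℕ) := by simp [fb, h]

lemma T_pos (b : Fin n → Bool) (hn : 1 ≤ n) (hTop : extB b (n - 1) = true) :
    1 ≤ cntB (extB b) true n := by
  have := cntB_strict (extB b) true hTop (show n - 1 < n by omega)
  omega

lemma T_le (b : Fin n → Bool) : cntB (extB b) true n ≤ n := cntB_le _ _ _

lemma fb_lt_iff (b : Fin n → Bool) (hTop : extB b (n - 1) = true) (k : Fin n) :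
    ((fb b k : ℕ) < cntB (extB b) true n ↔ b k = true) := by
  have hkn := k.isLt
  cases hb : b k
  · have h1 := fb_false_val b k hb
    have h2 : cntB (extB b) false (k : ℕ) + 1 ≤ cntB (extB b) false n :=
      cntB_strict (extB b) false (by rw [extB_val]; exact hb) hkn
    have h3 := cntB_add (extB b) n
    simp only [Bool.false_eq_true, iff_false, not_lt]
    omega
  · have h1 := fb_true_val b k hb
    have h2 : cntB (extB b) true (k : ℕ) + 1 ≤ cntB (extB b) true n :=
      cntB_strict (extB b) true (by rw [extB_val]; exact hb) hkn
    simp only [iff_true]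
    omega

lemma fb_inj (b : Fin n → Bool) (hn : 1 ≤ n) (hTop : extB b (n - 1) = true) :
    Function.Injective (fb b) := by
  intro k k' h
  by_contra hne
  have hvne : (k : ℕ) ≠ (k' : ℕ) := fun hv => hne (Fin.ext hv)
  have hval : (fb b k : ℕ) = (fb b k' : ℕ) := congrArg Fin.val h
  have hlt := fb_lt_iff b hTop k
  have hlt' := fb_lt_iff b hTop k'
  cases hb : b k <;> cases hb' : b k'
  · -- both false
    have h1 := fb_false_val b k hb
    have h2 := fb_false_val b k' hb'
    have hb1 : cntB (extB b) false (k : ℕ) ≤ (k : ℕ) := cntB_le _ _ _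
    have hb2 : cntB (extB b) false (k' : ℕ) ≤ (k' : ℕ) := cntB_le _ _ _
    have hk1 := k.isLt
    have hk2 := k'.isLt
    have hcnt : cntB (extB b) false (k : ℕ) = cntB (extB b) false (k' : ℕ) := by omega
    rcases Nat.lt_or_ge (k : ℕ) (k' : ℕ) with hlt2 | hge
    · have := cntB_strict (extB b) false (by rw [extB_val]; exact hb) hlt2
      omega
    · have hlt2 : (k' : ℕ) < (k : ℕ) := by omega
      have := cntB_strict (extB b) false (by rw [extB_val]; exact hb') hlt2
      omega
  · rw [hb] at hlt; rw [hb'] at hlt'; simp at hlt hlt'; omega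
  · rw [hb] at hlt; rw [hb'] at hlt'; simp at hlt hlt'; omega
  · -- both true
    have h1 := fb_true_val b k hb
    have h2 := fb_true_val b k' hb'
    rcases Nat.lt_or_ge (k : ℕ) (k' : ℕ) with hlt2 | hge
    · have := cntB_strict (extB b) true (by rw [extB_val]; exact hb) hlt2
      omega
    · have hlt2 : (k' : ℕ) < (k : ℕ) := by omega
      have := cntB_strict (extB b) true (by rw [extB_val]; exact hb') hlt2
      omega

/-- the permutation associated to the bits. -/
noncomputable def Eb (b : Fin n → Bool) (hn : 1 ≤ n) (hTop : extB b (n - 1) = true) :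
    Equiv.Perm (Fin n) :=
  Equiv.ofBijective (fb b) (Finite.injective_iff_bijective.mp (fb_inj b hn hTop))

lemma Eb_apply (b : Fin n → Bool) (hn : 1 ≤ n) (hTop : extB b (n - 1) = true) (k : Fin n) :
    Eb b hn hTop k = fb b k := rfl

lemma fb_top (b : Fin n → Bool) (hn : 1 ≤ n) (hTop : extB b (n - 1) = true)
    (a : Fin n) (ha : (a : ℕ) = n - 1) :
    (fb b a : ℕ) = cntB (extB b) true n - 1 := by
  obtain ⟨m, rfl⟩ : ∃ m, n = m + 1 := ⟨n - 1, by omega⟩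
  have ha' : (a : ℕ) = m := by omega
  have hba : b a = true := by rw [← extB_val b a, ha']; simpa using hTop
  have h1 := fb_true_val b a hba
  have h2 : cntB (extB b) true (m + 1) = cntB (extB b) true m + 1 := by
    rw [cntB_succ, if_pos (by simpa using hTop)]
  rw [h1, ha', h2]
  omega

lemma Eb_left (b : Fin n → Bool) (hn : 1 ≤ n) (hTop : extB b (n - 1) = true)
    (i j : Fin n) (hij : i < j) (hjM : (j : ℕ) ≤ cntB (extB b) true n - 1) :
    (Eb b hn hTop).symm i < (Eb b hn hTop).symm j := by
  have hT1 := T_pos b hn hTop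
  set e := Eb b hn hTop with he
  have hki : fb b (e.symm i) = i := e.apply_symm_apply i
  have hkj : fb b (e.symm j) = j := e.apply_symm_apply j
  have hbi : b (e.symm i) = true := by
    rw [← fb_lt_iff b hTop, hki]
    have := Fin.lt_def.mp hij; omega
  have hbj : b (e.symm j) = true := by
    rw [← fb_lt_iff b hTop, hkj]; omega
  have hvi : (i : ℕ) = cntB (extB b) true ((e.symm i : Fin n) : ℕ) := by
    have h := fb_true_val b (e.symm i) hbi; rw [hki] at h; omega
  have hvj : (j : ℕ) = cntB (extB b) true ((e.symm j : Fin n) : ℕ) := by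
    have h := fb_true_val b (e.symm j) hbj; rw [hkj] at h; omega
  rw [Fin.lt_def]
  by_contra hcon
  push_neg at hcon
  have := cntB_mono (extB b) true hcon
  have := Fin.lt_def.mp hij
  omega

lemma Eb_right (b : Fin n → Bool) (hn : 1 ≤ n) (hTop : extB b (n - 1) = true)
    (i j : Fin n) (hMi : cntB (extB b) true n - 1 ≤ (i : ℕ)) (hij : i < j) :
    (Eb b hn hTop).symm j < (Eb b hn hTop).symm i := by
  have hT1 := T_pos b hn hTop
  set e := Eb b hn hTop with he
  have hki : fb b (e.symm i) = i := e.apply_symm_apply i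
  have hkj : fb b (e.symm j) = j := e.apply_symm_apply j
  have hij' := Fin.lt_def.mp hij
  have hbj : b (e.symm j) = false := by
    have h := fb_lt_iff b hTop (e.symm j)
    rw [hkj] at h
    cases hb : b (e.symm j)
    · rfl
    · rw [hb] at h; simp at h; omega
  have hvj : (j : ℕ) = n - 1 - cntB (extB b) false ((e.symm j : Fin n) : ℕ) := by
    have h := fb_false_val b (e.symm j) hbj; rw [hkj] at h; omega
  rcases Nat.lt_or_ge (i : ℕ) (cntB (extB b) true n) with hiT | hiT
  · -- i = T - 1, so e.symm i is the last position
    have hieq : (i : ℕ) = cntB (extB b) true n - 1 := by omega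
    obtain ⟨a, ha⟩ : ∃ a : Fin n, (a : ℕ) = n - 1 := ⟨⟨n - 1, by omega⟩, rfl⟩
    have hfa : (fb b a : ℕ) = cntB (extB b) true n - 1 := fb_top b hn hTop a ha
    have hia : e.symm i = a := by
      apply fb_inj b hn hTop
      rw [hki]
      exact Fin.ext (by rw [hfa, hieq])
    rw [hia, Fin.lt_def, ha]
    have hj2 : e.symm j ≠ a := by
      intro hcon
      have : e.symm i = e.symm j := by rw [hia, hcon]
      have := e.symm.injective this
      exact absurd this (Fin.ne_of_lt hij)
    have := (e.symm j).isLt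
    have : ((e.symm j : Fin n) : ℕ) ≠ n - 1 := fun hcon =>
      hj2 (Fin.ext (by rw [hcon, ha]))
    omega
  · -- both on the false side
    have hbi : b (e.symm i) = false := by
      have h := fb_lt_iff b hTop (e.symm i)
      rw [hki] at h
      cases hb : b (e.symm i)
      · rfl
      · rw [hb] at h; simp at h; omega
    have hvi : (i : ℕ) = n - 1 - cntB (extB b) false ((e.symm i : Fin n) : ℕ) := by
      have h := fb_false_val b (e.symm i) hbi; rw [hki] at h; omega
    have hb1 : cntB (extB b) false ((e.symm i : Fin n) : ℕ) ≤ ((e.symm i : Fin n) : ℕ) :=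
      cntB_le _ _ _
    have hb2 : cntB (extB b) false ((e.symm j : Fin n) : ℕ) ≤ ((e.symm j : Fin n) : ℕ) :=
      cntB_le _ _ _
    have hk1 := (e.symm i).isLt
    have hk2 := (e.symm j).isLt
    rw [Fin.lt_def]
    by_contra hcon
    push_neg at hcon
    have := cntB_mono (extB b) false hcon
    omega


lemma phi_Eb (b : Fin n → Bool) (hn : 1 ≤ n) (hTop : extB b (n - 1) = true)
    (L : Fin n) (hL : (L : ℕ) = n - 1) (k : Fin n) :
    decide ((Eb b hn hTop k : ℕ) ≤ ((Eb b hn hTop L : Fin n) : ℕ)) = b k := by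
  have h1 : (fb b L : ℕ) = cntB (extB b) true n - 1 := fb_top b hn hTop L hL
  have hT1 := T_pos b hn hTop
  rw [Eb_apply, Eb_apply, h1]
  have hlt := fb_lt_iff b hTop k
  cases hb : b k
  · rw [hb] at hlt; simp only [Bool.false_eq_true, iff_false, not_lt] at hlt
    exact decide_eq_false (by omega)
  · rw [hb] at hlt; simp only [iff_true] at hlt
    exact decide_eq_true (by omega)

lemma M_top (e : Equiv.Perm (Fin n)) (M : Fin n)
    (hl : ∀ i j : Fin n, i < j → j ≤ M → e.symm i < e.symm j)
    (hr : ∀ i j : Fin n, M ≤ i → i < j → e.symm j < e.symm i)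
    (L : Fin n) (hL : (L : ℕ) = n - 1) : e L = M := by
  have hmax : ∀ w : Fin n, (e.symm w : ℕ) ≤ (e.symm M : ℕ) := by
    intro w
    rcases lt_trichotomy ((w : ℕ)) ((M : ℕ)) with h | h | h
    · exact le_of_lt (Fin.lt_def.mp (hl w M (Fin.lt_def.mpr h) (le_refl M)))
    · have : w = M := Fin.ext h
      rw [this]
    · exact le_of_lt (Fin.lt_def.mp (hr M w (le_refl M) (Fin.lt_def.mpr h)))
  have h1 : (e.symm (e L) : ℕ) = n - 1 := by rw [e.symm_apply_apply]; exact hL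
  have h2 := hmax (e L)
  have h3 : (e.symm M : ℕ) ≤ n - 1 := by have := (e.symm M).isLt; have := M.pos; omega
  have h4 : e.symm M = L := Fin.ext (by omega)
  rw [← h4, e.apply_symm_apply]

lemma fb_phi (e : Equiv.Perm (Fin n)) (M : Fin n)
    (hl : ∀ i j : Fin n, i < j → j ≤ M → e.symm i < e.symm j)
    (hr : ∀ i j : Fin n, M ≤ i → i < j → e.symm j < e.symm i)
    (k : Fin n) :
    fb (fun k => decide ((e k : ℕ) ≤ (M : ℕ))) k = e k := by
  set b : Fin n → Bool := fun k => decide ((e k : ℕ) ≤ (M : ℕ)) with hbdef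
  have hbi : ∀ i : Fin n, b i = true ↔ (e i : ℕ) ≤ (M : ℕ) := fun i => by
    simp [hbdef]
  have hbif : ∀ i : Fin n, b i = false ↔ (M : ℕ) < (e i : ℕ) := fun i => by
    simp [hbdef]
  cases hb : b k
  · have hMk : (M : ℕ) < (e k : ℕ) := (hbif k).mp hb
    have h1 := fb_false_val b k hb
    have h2 := cnt_eq_card b false (k : ℕ) (le_of_lt k.isLt)
    have h3 : Finset.univ.filter (fun i : Fin n => (i : ℕ) < (k : ℕ) ∧ b i = false)
        = Finset.univ.filter (fun i : Fin n => (e k : ℕ) < (e i : ℕ)) := by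
      apply Finset.filter_congr
      intro i _
      constructor
      · rintro ⟨hik, hbi2⟩
        have hMi : (M : ℕ) < (e i : ℕ) := (hbif i).mp hbi2
        rcases Nat.lt_trichotomy ((e i : ℕ)) ((e k : ℕ)) with h | h | h
        · exfalso
          have h5 := hr (e i) (e k) (Fin.le_def.mpr (by omega)) (Fin.lt_def.mpr h)
          simp only [Equiv.symm_apply_apply] at h5
          have := Fin.lt_def.mp h5; omega
        · exfalso
          have : i = k := e.injective (Fin.ext h)
          have := congrArg Fin.val this; omega
        · exact h
      · intro h
        have hMi : (M : ℕ) < (e i : ℕ) := by omega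
        have h5 := hr (e k) (e i) (Fin.le_def.mpr (by omega)) (Fin.lt_def.mpr h)
        simp only [Equiv.symm_apply_apply] at h5
        exact ⟨Fin.lt_def.mp h5, (hbif i).mpr hMi⟩
    have h4 : (Finset.univ.filter (fun i : Fin n => (e k : ℕ) < (e i : ℕ))).card
        = (Finset.univ.filter (fun w : Fin n => (e k : ℕ) < (w : ℕ))).card := by
      apply Finset.card_equiv e
      intro i; simp
    have h5 := card_val_gt (n := n) ((e k : Fin n) : ℕ) (e k).isLt
    apply Fin.ext
    rw [h1, h2, h3, h4, h5]
    have := (e k).isLt; omega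
  · have hMk : (e k : ℕ) ≤ (M : ℕ) := (hbi k).mp hb
    have h1 := fb_true_val b k hb
    have h2 := cnt_eq_card b true (k : ℕ) (le_of_lt k.isLt)
    have h3 : Finset.univ.filter (fun i : Fin n => (i : ℕ) < (k : ℕ) ∧ b i = true)
        = Finset.univ.filter (fun i : Fin n => (e i : ℕ) < (e k : ℕ)) := by
      apply Finset.filter_congr
      intro i _
      constructor
      · rintro ⟨hik, hbi2⟩
        have hMi : (e i : ℕ) ≤ (M : ℕ) := (hbi i).mp hbi2
        rcases Nat.lt_trichotomy ((e i : ℕ)) ((e k : ℕ)) with h | h | h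
        · exact h
        · exfalso
          have : i = k := e.injective (Fin.ext h)
          have := congrArg Fin.val this; omega
        · exfalso
          have h5 := hl (e k) (e i) (Fin.lt_def.mpr h) (Fin.le_def.mpr (by omega))
          simp only [Equiv.symm_apply_apply] at h5
          have := Fin.lt_def.mp h5; omega
      · intro h
        have h5 := hl (e i) (e k) (Fin.lt_def.mpr h) (Fin.le_def.mpr (by omega))
        simp only [Equiv.symm_apply_apply] at h5
        exact ⟨Fin.lt_def.mp h5, (hbi i).mpr (by omega)⟩
    have h4 : (Finset.univ.filter (fun i : Fin n => (e i : ℕ) < (e k : ℕ))).card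
        = (Finset.univ.filter (fun w : Fin n => (w : ℕ) < (e k : ℕ))).card := by
      apply Finset.card_equiv e
      intro i; simp
    have h5 := card_val_lt (n := n) ((e k : Fin n) : ℕ) (le_of_lt (e k).isLt)
    apply Fin.ext
    rw [h1, h2, h3, h4, h5]

end Stmt0Aux

/-- An order `≺` on the vertices of `A_n` is eliminating iff it is an intertwining of the
two chains `1 ≺ 2 ≺ ⋯ ≺ M` and `n ≺ n-1 ≺ ⋯ ≺ M` for some vertex `M`; moreover there are
exactly `2 ^ (n - 1)` eliminating orders on `A_n`. -/
theorem stmt0 (n : ℕ) (hn : 1 ≤ n) :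
    (∀ e : Equiv.Perm (Fin n), IsElim e ↔
      ∃ M : Fin n,
        (∀ i j : Fin n, i < j → j ≤ M → e.symm i < e.symm j) ∧
        (∀ i j : Fin n, M ≤ i → i < j → e.symm j < e.symm i)) ∧
    Nat.card {e : Equiv.Perm (Fin n) // IsElim e} = 2 ^ (n - 1) := by
  have main : ∀ e : Equiv.Perm (Fin n), IsElim e ↔
      ∃ M : Fin n,
        (∀ i j : Fin n, i < j → j ≤ M → e.symm i < e.symm j) ∧
        (∀ i j : Fin n, M ≤ i → i < j → e.symm j < e.symm i) := by
    intro e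
    constructor
    · exact Stmt0Aux.elim_imp_rhs hn e
    · rintro ⟨M, hl, hr⟩
      exact Stmt0Aux.rhs_imp_elim e M hl hr
  refine ⟨main, ?_⟩
  obtain ⟨L, hL⟩ : ∃ L : Fin n, (L : ℕ) = n - 1 := ⟨⟨n - 1, by omega⟩, rfl⟩
  have hTopOf : ∀ b : Fin n → Bool, b L = true → Stmt0Aux.extB b (n - 1) = true := by
    intro b hb
    rw [← hL, Stmt0Aux.extB_val]
    exact hb
  have hMlt : ∀ b : Fin n → Bool, Stmt0Aux.cntB (Stmt0Aux.extB b) true n - 1 < n := by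
    intro b
    have := Stmt0Aux.T_le b
    omega
  let EQ : {e : Equiv.Perm (Fin n) // IsElim e} ≃ {b : Fin n → Bool // b L = true} :=
    { toFun := fun p => ⟨fun k => decide ((p.1 k : ℕ) ≤ ((p.1 L : Fin n) : ℕ)), by simp⟩
      invFun := fun q =>
        ⟨Stmt0Aux.Eb q.1 hn (hTopOf q.1 q.2),
          Stmt0Aux.rhs_imp_elim _ ⟨Stmt0Aux.cntB (Stmt0Aux.extB q.1) true n - 1, hMlt q.1⟩
            (fun i j hij hjM => Stmt0Aux.Eb_left q.1 hn (hTopOf q.1 q.2) i j hij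
              (Fin.le_def.mp hjM))
            (fun i j hMi hij => Stmt0Aux.Eb_right q.1 hn (hTopOf q.1 q.2) i j
              (Fin.le_def.mp hMi) hij)⟩
      left_inv := by
        rintro ⟨e, he⟩
        apply Subtype.ext
        apply Equiv.ext
        intro k
        obtain ⟨M, hl, hr⟩ := (main e).mp he
        have heL : e L = M := Stmt0Aux.M_top e M hl hr L hL
        show Stmt0Aux.fb (fun k => decide ((e k : ℕ) ≤ ((e L : Fin n) : ℕ))) k = e k
        have hbeq : (fun k => decide ((e k : ℕ) ≤ ((e L : Fin n) : ℕ)))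
            = fun k => decide ((e k : ℕ) ≤ (M : ℕ)) := by
          funext x; rw [heL]
        rw [hbeq]
        exact Stmt0Aux.fb_phi e M hl hr k
      right_inv := by
        rintro ⟨b, hb⟩
        apply Subtype.ext
        funext k
        exact Stmt0Aux.phi_Eb b hn (hTopOf b hb) L hL k }
  rw [Nat.card_congr EQ]
  let E2 : {b : Fin n → Bool // b L = true} ≃ ({i : Fin n // i ≠ L} → Bool) :=
    { toFun := fun q i => q.1 i.1
      invFun := fun g => ⟨fun i => if h : i = L then true else g ⟨i, h⟩, by simp⟩
      left_inv := by
        rintro ⟨b, hb⟩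
        apply Subtype.ext
        funext i
        by_cases h : i = L
        · subst h; simp [hb]
        · simp [h]
      right_inv := by
        intro g
        funext i
        simp [i.2] }
  rw [Nat.card_congr E2, Nat.card_eq_fintype_card, Fintype.card_fun]
  have hcard : Fintype.card {i : Fin n // i ≠ L} = n - 1 := by
    have h := Fintype.card_subtype_compl (p := fun i : Fin n => i = L)
    simp [Fintype.card_subtype_eq] at h
    simpa using h
  rw [hcard, Fintype.card_bool]
end
end

section
/- For n ≥ 2, the map Φ_n : ℝ_{>0} × ℝ × P_{A_{n−1}} → P_{A_n} defined by Φ_n(a,b,z) = y, where y_{11} = a, y_{12} = y_{21} = ab, y_{22} = ab² + z_{22}, and y_{ij} = z_{ij} for all other pairs (i,j), is well defined (its values indeed lie in P_{A_n}) and is a bijection. -/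
open Matrix

noncomputable section

/-- Tridiagonal symmetric real `n × n` matrices (the space `Z_G` for `G = A_n`). -/
def ZG (n : ℕ) : Set (Matrix (Fin n) (Fin n) ℝ) :=
  {y | y.IsSymm ∧ ∀ i j : Fin n, ((i : ℕ) + 1 < (j : ℕ) ∨ (j : ℕ) + 1 < (i : ℕ)) → y i j = 0}

/-- The cone `P_G` of positive definite matrices in `Z_G`. -/
def PG (n : ℕ) : Set (Matrix (Fin n) (Fin n) ℝ) :=
  {y | y ∈ ZG n ∧ y.PosDef}

/-- The map `Φ : (a, b, z) ↦ y` of the recurrent construction of `P_{A_{n+2}}` from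
`P_{A_{n+1}}` : `y₁₁ = a`, `y₁₂ = y₂₁ = ab`, `y₂₂ = ab² + z₂₂`, and `y_{ij} = z_{ij}`
otherwise (vertex `v` of the inner graph `{2, …, n+2}` is the index `v - 2` of `z`). -/
def Phi {n : ℕ} (a b : ℝ) (z : Matrix (Fin (n + 1)) (Fin (n + 1)) ℝ) :
    Matrix (Fin (n + 2)) (Fin (n + 2)) ℝ :=
  Matrix.of fun i j =>
    if (i : ℕ) = 0 ∧ (j : ℕ) = 0 then a
    else if ((i : ℕ) = 0 ∧ (j : ℕ) = 1) ∨ ((i : ℕ) = 1 ∧ (j : ℕ) = 0) then a * b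
    else if (i : ℕ) = 0 ∨ (j : ℕ) = 0 then 0
    else (if (i : ℕ) = 1 ∧ (j : ℕ) = 1 then a * b ^ 2 else 0) +
      z ⟨(i : ℕ) - 1, by have := i.isLt; omega⟩ ⟨(j : ℕ) - 1, by have := j.isLt; omega⟩

/-!
With `x = (x₀, x')`, the quadratic form of `Φ(a, b, z)` is `a (x₀ + b x₁)² + x'ᵀ z x'`. Hence
`Φ(a, b, z)` is positive definite iff `a > 0` and `z` is (to see that `z` is, take
`x₀ = -b x₁`, which kills the first square). A tridiagonal `y` with `y₁₁ ≠ 0` is `Φ(a, b, z)` for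
`a = y₁₁`, `b = y₁₂ / a`, and `z` the lower-right block of `y` with `ab²` subtracted from its corner;
positive definiteness of `y` gives `y₁₁ > 0`.
-/

section
variable {n : ℕ} (a b : ℝ) (z : Matrix (Fin (n + 1)) (Fin (n + 1)) ℝ)

@[simp] lemma phi_apply_zero_zero : Phi a b z 0 0 = a := by simp [Phi]

@[simp] lemma phi_apply_zero_succ (j : Fin (n + 1)) :
    Phi a b z 0 j.succ = if j = 0 then a * b else 0 := by
  simp [Phi, ← Fin.val_eq_zero_iff]

@[simp] lemma phi_apply_succ_zero (i : Fin (n + 1)) :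
    Phi a b z i.succ 0 = if i = 0 then a * b else 0 := by
  simp [Phi, ← Fin.val_eq_zero_iff]

@[simp] lemma phi_apply_succ_succ (i j : Fin (n + 1)) :
    Phi a b z i.succ j.succ = (if i = 0 ∧ j = 0 then a * b ^ 2 else 0) + z i j := by
  simp [Phi, ← Fin.val_eq_zero_iff]

@[simp] lemma phi_apply_zero_one : Phi a b z 0 1 = a * b := by
  simpa using phi_apply_zero_succ a b z 0

@[simp] lemma phi_apply_one_zero : Phi a b z 1 0 = a * b := by
  simpa using phi_apply_succ_zero a b z 0

lemma isSymm_phi_iff : (Phi a b z).IsSymm ↔ z.IsSymm := by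
  refine ⟨fun h => IsSymm.ext fun i j => ?_, fun h => IsSymm.ext fun i j => ?_⟩
  · simpa [and_comm] using h.apply i.succ j.succ
  · cases i using Fin.cases <;> cases j using Fin.cases <;> simp [h.apply, and_comm]

lemma phi_mem_ZG_iff : Phi a b z ∈ ZG (n + 2) ↔ z ∈ ZG (n + 1) := by
  refine and_congr (isSymm_phi_iff a b z) ⟨fun h i j hij => ?_, fun h i j hij => ?_⟩
  · have hij₀ : ¬(i = 0 ∧ j = 0) := by rintro ⟨rfl, rfl⟩; simp at hij
    simpa [hij₀] using h i.succ j.succ (by simpa using hij)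
  · obtain rfl | ⟨i, rfl⟩ := Fin.eq_zero_or_eq_succ i <;>
      obtain rfl | ⟨j, rfl⟩ := Fin.eq_zero_or_eq_succ j
    · simp at hij
    · simp [← Fin.val_eq_zero_iff] at hij ⊢; omega
    · simp [← Fin.val_eq_zero_iff] at hij ⊢; omega
    · have hij₀ : ¬(i = 0 ∧ j = 0) := by rintro ⟨rfl, rfl⟩; simp at hij
      simp [hij₀, h _ _ (by simpa using hij)]

lemma dotProduct_phi_mulVec (x : Fin (n + 2) → ℝ) :
    x ⬝ᵥ (Phi a b z *ᵥ x) = a * (x 0 + b * x 1) ^ 2 + Fin.tail x ⬝ᵥ (z *ᵥ Fin.tail x) := by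
  simp [dotProduct, mulVec, Fin.sum_univ_succ (n := n + 1), Fin.tail, add_mul, mul_add,
    Finset.sum_add_distrib, Finset.mul_sum, ite_and]
  ring

lemma phi_posDef_iff (hz : z.IsSymm) : (Phi a b z).PosDef ↔ 0 < a ∧ z.PosDef := by
  refine ⟨fun h => ⟨by simpa using h.diag_pos (i := 0), ?_⟩, fun ⟨ha, h⟩ => ?_⟩
  · refine .of_dotProduct_mulVec_pos (isHermitian_iff_isSymm.2 hz) fun x hx => ?_
    have hw : vecCons (-(b * x 0)) x ≠ 0 := by simp [hx]
    have := h.dotProduct_mulVec_pos hw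
    rw [star_trivial, dotProduct_phi_mulVec] at this
    simpa using this
  · refine .of_dotProduct_mulVec_pos
      (isHermitian_iff_isSymm.2 ((isSymm_phi_iff a b z).2 hz)) fun x hx => ?_
    rw [star_trivial, dotProduct_phi_mulVec]
    by_cases ht : Fin.tail x = 0
    · have hx0 : x 0 ≠ 0 := fun h0 => hx (funext fun i => Fin.cases h0 (congrFun ht) i)
      have hx1 : x 1 = 0 := congrFun ht 0
      simp [ht, hx1]
      positivity
    · have := h.dotProduct_mulVec_pos ht
      rw [star_trivial] at this
      positivity

lemma phi_mem_PG_iff : Phi a b z ∈ PG (n + 2) ↔ 0 < a ∧ z ∈ PG (n + 1) := by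
  change _ ∧ _ ↔ 0 < a ∧ _ ∧ _
  rw [phi_mem_ZG_iff, and_left_comm]
  exact and_congr_right fun hz => phi_posDef_iff a b z hz.1

lemma phi_eq_phi_iff (ha : a ≠ 0) {a' b' : ℝ} {z' : Matrix (Fin (n + 1)) (Fin (n + 1)) ℝ} :
    Phi a b z = Phi a' b' z' ↔ a = a' ∧ b = b' ∧ z = z' := by
  refine ⟨fun h => ?_, by rintro ⟨rfl, rfl, rfl⟩; rfl⟩
  have hA : a = a' := by simpa using congrFun (congrFun h 0) 0
  subst hA
  have hB : b = b' := by simpa [ha] using congrFun (congrFun h 0) 1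
  subst hB
  exact ⟨rfl, rfl, ext fun i j => by simpa using congrFun (congrFun h i.succ) j.succ⟩

lemma exists_phi_eq {y : Matrix (Fin (n + 2)) (Fin (n + 2)) ℝ} (hy : y ∈ ZG (n + 2))
    (h0 : y 0 0 ≠ 0) : ∃ b z, Phi (y 0 0) b z = y := by
  set b := y 0 1 / y 0 0
  have hb : y 0 0 * b = y 0 1 := mul_div_cancel₀ _ h0
  refine ⟨b, of fun i j => y i.succ j.succ - if i = 0 ∧ j = 0 then y 0 0 * b ^ 2 else 0, ?_⟩
  ext i j
  obtain rfl | ⟨i, rfl⟩ := Fin.eq_zero_or_eq_succ i <;>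
    obtain rfl | ⟨j, rfl⟩ := Fin.eq_zero_or_eq_succ j
  · simp
  · rcases eq_or_ne j 0 with rfl | hj
    · simpa using hb
    · simp only [phi_apply_zero_succ, if_neg hj]
      exact (hy.2 _ _ (.inl (by simpa [Fin.pos_iff_ne_zero] using hj))).symm
  · rcases eq_or_ne i 0 with rfl | hi
    · simpa [hy.1.apply 0 1] using hb
    · simp only [phi_apply_succ_zero, if_neg hi]
      exact (hy.2 _ _ (.inr (by simpa [Fin.pos_iff_ne_zero] using hi))).symm
  · simp

end

/-- `Φ` is a well-defined bijection from `ℝ₊ × ℝ × P_{A_{n+1}}` onto `P_{A_{n+2}}`. -/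
theorem stmt3 (n : ℕ) :
    Set.BijOn (fun p : ℝ × ℝ × Matrix (Fin (n + 1)) (Fin (n + 1)) ℝ => Phi p.1 p.2.1 p.2.2)
      {p | 0 < p.1 ∧ p.2.2 ∈ PG (n + 1)} (PG (n + 2)) := by
  refine ⟨fun p hp => (phi_mem_PG_iff _ _ _).2 hp, ?_, fun y hy => ?_⟩
  · rintro ⟨a, b, z⟩ ⟨ha, -⟩ ⟨a', b', z'⟩ - h
    obtain ⟨rfl, rfl, rfl⟩ := (phi_eq_phi_iff a b z ha.ne').1 h
    rfl
  · obtain ⟨b, z, hyz⟩ := exists_phi_eq hy.1 hy.2.diag_pos.ne'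
    exact ⟨(y 0 0, b, z), (phi_mem_PG_iff _ _ _).1 (hyz ▸ hy), hyz⟩
end
end

section
/- Let M ∈ {1,…,n} and s ∈ ℝ^n. For every y ∈ P_{A_n} and every u ∈ Z_{A_n}, the directional derivative (d/dt)|_{t=0} log Δ_{−s}^{(M)}(y + t·u) equals −tr(E_s^{(M)}(y)·u), where E_s^{(M)}(y) = Σ_{i=1}^{M−1}(s_i−s_{i+1})·[(y_{{1:i}})^{−1}]^0 + s_M·y^{−1} + Σ_{i=M+1}^{n}(s_i−s_{i−1})·[(y_{{i:n}})^{−1}]^0. Consequently the mean function of the Wishart family, −grad_y log Δ_{−s}^{(M)}(y) with respect to the trace pairing on Z_{A_n}, equals m_s^{(M)}(y) = π(E_s^{(M)}(y)). -/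
open Matrix Finset

noncomputable section

/-- The dual cone `Q_G`. -/
def QG (n : ℕ) : Set (Matrix (Fin n) (Fin n) ℝ) :=
  {η | η ∈ ZG n ∧ (∀ i : Fin n, 0 < η i i) ∧
    ∀ i j : Fin n, (i : ℕ) + 1 = (j : ℕ) → 0 < η i i * η j j - (η i j) ^ 2}

/-- The set of vertices `{i, i+1, …, j}` (vertices are `1`-based; vertex `v` is `⟨v-1, _⟩ : Fin n`). -/
def seg (n i j : ℕ) : Finset (Fin n) :=
  Finset.univ.filter fun a => i ≤ (a : ℕ) + 1 ∧ (a : ℕ) + 1 ≤ j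

/-- Determinant of the submatrix of `y` with rows and columns indexed by `I`. -/
def subdet {n : ℕ} (y : Matrix (Fin n) (Fin n) ℝ) (I : Finset (Fin n)) : ℝ :=
  (y.submatrix (fun a : {x : Fin n // x ∈ I} => a.1) (fun a : {x : Fin n // x ∈ I} => a.1)).det

/-- The projection `π` onto `I_G`, keeping only the entries with `|i - j| ≤ 1`. -/
def proj (n : ℕ) (A : Matrix (Fin n) (Fin n) ℝ) : Matrix (Fin n) (Fin n) ℝ :=
  Matrix.of fun i j => if (i : ℕ) ≤ (j : ℕ) + 1 ∧ (j : ℕ) ≤ (i : ℕ) + 1 then A i j else 0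

/-- The submatrix of `y` with rows and columns indexed by `I`. -/
def subm {n : ℕ} (y : Matrix (Fin n) (Fin n) ℝ) (I : Finset (Fin n)) :
    Matrix {x : Fin n // x ∈ I} {x : Fin n // x ∈ I} ℝ :=
  y.submatrix (fun a => a.1) (fun a => a.1)

/-- Extension by zero of a matrix indexed by `I` to an `n × n` matrix (the operation `(·)⁰`). -/
def zext {n : ℕ} (I : Finset (Fin n)) (A : Matrix {x : Fin n // x ∈ I} {x : Fin n // x ∈ I} ℝ) :
    Matrix (Fin n) (Fin n) ℝ :=
  Matrix.of fun i j =>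
    if hi : i ∈ I then (if hj : j ∈ I then A ⟨i, hi⟩ ⟨j, hj⟩ else 0) else 0

/-- The matrix `[(y_I)⁻¹]⁰`. -/
def subinv0 {n : ℕ} (y : Matrix (Fin n) (Fin n) ℝ) (I : Finset (Fin n)) :
    Matrix (Fin n) (Fin n) ℝ :=
  zext I (subm y I)⁻¹

/-- `E_s^{(M)}(y) = Σ_{i<M} (s_i - s_{i+1}) [(y_{1:i})⁻¹]⁰ + s_M y⁻¹
+ Σ_{i>M} (s_i - s_{i-1}) [(y_{i:n})⁻¹]⁰`; the mean map is `m_s^{(M)} = π ∘ E_s^{(M)}`. -/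
def Emat (n M : ℕ) (s : ℕ → ℝ) (y : Matrix (Fin n) (Fin n) ℝ) :
    Matrix (Fin n) (Fin n) ℝ :=
  (∑ i ∈ Finset.Ico 1 M, (s i - s (i + 1)) • subinv0 y (seg n 1 i)) + s M • y⁻¹ +
    ∑ i ∈ Finset.Ioc M n, (s i - s (i - 1)) • subinv0 y (seg n i n)

/-- The `M`-power function `Δ_s^{(M)}` on `P_{A_n}` (real exponents, `1`-based `s`). -/
def Delta (n M : ℕ) (s : ℕ → ℝ) (y : Matrix (Fin n) (Fin n) ℝ) : ℝ :=
  (∏ i ∈ Finset.Ico 1 M, subdet y (seg n 1 i) ^ (s i - s (i + 1))) * y.det ^ (s M) *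
    ∏ i ∈ Finset.Ioc M n, subdet y (seg n i n) ^ (s i - s (i - 1))

/-!
Near `t = 0` all principal minors of `y + t • u` stay positive, so there `log Δ` is a linear
combination of the functions `t ↦ log det (y_I + t • u_I)`. Jacobi's formula gives each of them
the derivative `tr ((y_I)⁻¹ u_I) = tr ([(y_I)⁻¹]⁰ u)` at `0`. The projection `π` may be inserted
because `u` vanishes off the band `|i - j| ≤ 1`.
-/

section DetDerivative

variable {m : Type*} [Fintype m] [DecidableEq m]

open Polynomial in
theorem hasDerivAt_det_one_add_smul {𝕜 : Type*} [NontriviallyNormedField 𝕜] (C : Matrix m m 𝕜) :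
    HasDerivAt (fun t : 𝕜 => (1 + t • C).det) C.trace 0 := by
  rw [show (fun t : 𝕜 => (1 + t • C).det) = _ from funext fun t => det_one_add_smul t C]
  set q := ((1 + (X : 𝕜[X]) • C.map Polynomial.C).det).divX.divX
  have h := (((hasDerivAt_id (0 : 𝕜)).const_mul C.trace).const_add 1).add
    ((q.hasDerivAt 0).mul (hasDerivAt_pow 2 (0 : 𝕜)))
  exact h.congr_deriv (by simp)

theorem hasDerivAt_det_add_smul {𝕜 : Type*} [NontriviallyNormedField 𝕜] {A : Matrix m m 𝕜}
    (hA : IsUnit A.det) (B : Matrix m m 𝕜) :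
    HasDerivAt (fun t : 𝕜 => (A + t • B).det) (A.det * (A⁻¹ * B).trace) 0 := by
  have h : (fun t : 𝕜 => (A + t • B).det) = fun t => A.det * (1 + t • (A⁻¹ * B)).det := by
    funext t
    rw [← det_mul, Matrix.mul_add, Matrix.mul_one, Matrix.mul_smul, ← Matrix.mul_assoc,
      mul_nonsing_inv A hA, Matrix.one_mul]
  rw [h]
  exact (hasDerivAt_det_one_add_smul _).const_mul _

theorem hasDerivAt_log_det_add_smul {A : Matrix m m ℝ} (hA : A.det ≠ 0) (B : Matrix m m ℝ) :
    HasDerivAt (fun t : ℝ => Real.log (A + t • B).det) (A⁻¹ * B).trace 0 := by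
  have h := (hasDerivAt_det_add_smul hA.isUnit B).log (by simpa using hA)
  simpa [hA] using h

theorem eventually_det_add_smul_pos {A : Matrix m m ℝ} (hA : 0 < A.det) (B : Matrix m m ℝ) :
    ∀ᶠ t in nhds (0 : ℝ), 0 < (A + t • B).det :=
  continuousAt_const.eventually_lt (hasDerivAt_det_add_smul hA.ne'.isUnit B).continuousAt
    (by simpa using hA)

end DetDerivative

theorem trace_zext_mul {n : ℕ} (I : Finset (Fin n)) (A : Matrix I I ℝ)
    (u : Matrix (Fin n) (Fin n) ℝ) :
    (zext I A * u).trace = (A * subm u I).trace := by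
  simp only [Matrix.trace, Matrix.diag, mul_apply, subm, submatrix_apply, zext, of_apply]
  rw [univ_eq_attach, sum_attach_eq_sum_dite]
  refine sum_congr rfl fun i _ => ?_
  split_ifs with hi
  · rw [sum_attach_eq_sum_dite]
    refine sum_congr rfl fun j _ => ?_
    split_ifs <;> simp
  · simp

theorem trace_mul_proj {n : ℕ} {u : Matrix (Fin n) (Fin n) ℝ} (hu : u ∈ ZG n)
    (A : Matrix (Fin n) (Fin n) ℝ) :
    (A * u).trace = (proj n A * u).trace := by
  simp only [Matrix.trace, Matrix.diag, mul_apply, proj, of_apply]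
  refine sum_congr rfl fun i _ => sum_congr rfl fun j _ => ?_
  split_ifs with h
  · rfl
  · rw [zero_mul, hu.2 j i (by omega), mul_zero]

theorem Emat_neg (n M : ℕ) (s : ℕ → ℝ) (y : Matrix (Fin n) (Fin n) ℝ) :
    Emat n M (fun i => -s i) y = -Emat n M s y := by
  simp only [Emat, neg_add, ← sum_neg_distrib, ← neg_smul, neg_sub_neg, neg_sub]

theorem trace_Emat_mul (n M : ℕ) (s : ℕ → ℝ) (y u : Matrix (Fin n) (Fin n) ℝ) :
    (Emat n M s y * u).trace =
      ∑ i ∈ Ico 1 M, (s i - s (i + 1)) * ((subm y (seg n 1 i))⁻¹ * subm u (seg n 1 i)).trace +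
        s M * (y⁻¹ * u).trace +
        ∑ i ∈ Ioc M n, (s i - s (i - 1)) * ((subm y (seg n i n))⁻¹ * subm u (seg n i n)).trace := by
  simp only [Emat, subinv0, Matrix.add_mul, trace_add, Matrix.sum_mul, trace_sum,
    Matrix.smul_mul, trace_smul, smul_eq_mul, trace_zext_mul]

def logDeltaSum (n M : ℕ) (s : ℕ → ℝ) (w : Matrix (Fin n) (Fin n) ℝ) : ℝ :=
  ∑ i ∈ Ico 1 M, (s i - s (i + 1)) * Real.log (subdet w (seg n 1 i)) + s M * Real.log w.det +
    ∑ i ∈ Ioc M n, (s i - s (i - 1)) * Real.log (subdet w (seg n i n))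

theorem log_Delta_eq_logDeltaSum (n M : ℕ) (s : ℕ → ℝ) {w : Matrix (Fin n) (Fin n) ℝ}
    (hminors : ∀ I, 0 < subdet w I) (hdet : 0 < w.det) :
    Real.log (Delta n M s w) = logDeltaSum n M s w := by
  have hpow : ∀ I (a : ℝ), 0 < subdet w I ^ a := fun I a => Real.rpow_pos_of_pos (hminors I) a
  have hprod : ∀ (J : Finset ℕ) (I : ℕ → Finset (Fin n)) (a : ℕ → ℝ),
      0 < ∏ i ∈ J, subdet w (I i) ^ a i := fun J I a => prod_pos fun i _ => hpow _ _
  have hdetpow : 0 < w.det ^ s M := Real.rpow_pos_of_pos hdet _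
  rw [Delta, Real.log_mul (mul_pos (hprod _ _ _) hdetpow).ne' (hprod _ _ _).ne',
    Real.log_mul (hprod _ _ _).ne' hdetpow.ne',
    Real.log_prod fun i _ => (hpow _ _).ne', Real.log_prod fun i _ => (hpow _ _).ne',
    Real.log_rpow hdet, logDeltaSum]
  simp only [Real.log_rpow (hminors _)]

theorem hasDerivAt_logDeltaSum (n M : ℕ) (s : ℕ → ℝ) {y : Matrix (Fin n) (Fin n) ℝ}
    (hy : y.PosDef) (u : Matrix (Fin n) (Fin n) ℝ) :
    HasDerivAt (fun t : ℝ => logDeltaSum n M s (y + t • u)) (Emat n M s y * u).trace 0 := by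
  have hminor : ∀ I, HasDerivAt (fun t : ℝ => Real.log (subdet (y + t • u) I))
      ((subm y I)⁻¹ * subm u I).trace 0 := fun I =>
    hasDerivAt_log_det_add_smul (hy.submatrix Subtype.val_injective).det_pos.ne' (subm u I)
  rw [trace_Emat_mul]
  exact ((HasDerivAt.fun_sum fun i _ => (hminor _).const_mul _).add
    ((hasDerivAt_log_det_add_smul hy.det_pos.ne' u).const_mul _)).add
    (HasDerivAt.fun_sum fun i _ => (hminor _).const_mul _)

theorem log_Delta_eventuallyEq_logDeltaSum (n M : ℕ) (s : ℕ → ℝ) {y : Matrix (Fin n) (Fin n) ℝ}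
    (hy : y.PosDef) (u : Matrix (Fin n) (Fin n) ℝ) :
    (fun t : ℝ => Real.log (Delta n M s (y + t • u))) =ᶠ[nhds 0]
      fun t => logDeltaSum n M s (y + t • u) := by
  have hminors : ∀ᶠ t in nhds (0 : ℝ), ∀ I, 0 < subdet (y + t • u) I :=
    Filter.eventually_all.2 fun I =>
      eventually_det_add_smul_pos (hy.submatrix Subtype.val_injective).det_pos (subm u I)
  filter_upwards [hminors, eventually_det_add_smul_pos hy.det_pos u] with t hI hdet
  exact log_Delta_eq_logDeltaSum n M s hI hdet

theorem stmt11_general (n : ℕ) (M : ℕ) (s : ℕ → ℝ)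
    (y : Matrix (Fin n) (Fin n) ℝ) (hy : y ∈ PG n)
    (u : Matrix (Fin n) (Fin n) ℝ) (hu : u ∈ ZG n) :
    HasDerivAt (fun t : ℝ => Real.log (Delta n M (fun i => -(s i)) (y + t • u)))
      (-(Matrix.trace (Emat n M s y * u))) 0 ∧
    Matrix.trace (Emat n M s y * u) = Matrix.trace (proj n (Emat n M s y) * u) := by
  have hderiv := hasDerivAt_logDeltaSum n M (fun i => -s i) hy.2 u
  rw [Emat_neg, Matrix.neg_mul, trace_neg] at hderiv
  exact ⟨hderiv.congr_of_eventuallyEq (log_Delta_eventuallyEq_logDeltaSum n M _ hy.2 u),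
    trace_mul_proj hu _⟩

/-- The directional derivative of `log Δ_{-s}^{(M)}` at `y ∈ P_{A_n}` in the direction
`u ∈ Z_{A_n}` is `-tr(E_s^{(M)}(y) u)`; consequently the mean function of the Wishart family,
i.e. minus the gradient of `log Δ_{-s}^{(M)}` w.r.t. the trace pairing on `Z_{A_n}`, is
`m_s^{(M)}(y) = π(E_s^{(M)}(y))`. -/
theorem stmt11 (n : ℕ) (M : ℕ) (hM1 : 1 ≤ M) (hMn : M ≤ n) (s : ℕ → ℝ)
    (y : Matrix (Fin n) (Fin n) ℝ) (hy : y ∈ PG n)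
    (u : Matrix (Fin n) (Fin n) ℝ) (hu : u ∈ ZG n) :
    HasDerivAt (fun t : ℝ => Real.log (Delta n M (fun i => -(s i)) (y + t • u)))
      (-(Matrix.trace (Emat n M s y * u))) 0 ∧
    Matrix.trace (Emat n M s y * u) = Matrix.trace (proj n (Emat n M s y) * u) :=
  stmt11_general n M s y hy u hu
end
end

section
/- Let M ∈ {1,…,n}. For every y ∈ P_{A_n} there exists an LU(M)-triangular n×n real matrix T with T_{ij} = 0 whenever |i−j| > 1, such that y = T·Tᵀ. -/
open Matrix

noncomputable section

/-- A matrix `T` is LU(M)-triangular (`M` is `1`-based, entries are `0`-based): `T_{ij} = 0`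
whenever (`i < M` and `j > i`) or (`i > M` and `j < i`), in `1`-based indexing. -/
def IsLU (n M : ℕ) (T : Matrix (Fin n) (Fin n) ℝ) : Prop :=
  ∀ i j : Fin n,
    (((i : ℕ) + 1 < M ∧ (i : ℕ) < (j : ℕ)) ∨ (M < (i : ℕ) + 1 ∧ (j : ℕ) < (i : ℕ))) →
      T i j = 0

/-!
Eliminate the first row and column: with `v = y e₀ / √y₀₀`, the matrix `y - v vᵀ` vanishes outside
its lower-right block, and that block (the Schur complement of `y₀₀`) is again positive definite and
tridiagonal, since only its top-left entry differs from the corresponding entry of `y`. Bordering a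
factor of the Schur complement by the column `v` gives a factor of `y` whose shape is LU(M) when the
smaller factor is LU(M - 1), provided `M ≥ 2`. For `M ≤ 1` the factor sought is upper triangular,
and reversing the order of the indices turns this into the lower-triangular case.
-/

def IsTridiag {n : ℕ} (T : Matrix (Fin n) (Fin n) ℝ) : Prop :=
  ∀ i j : Fin n, ((i : ℕ) + 1 < (j : ℕ) ∨ (j : ℕ) + 1 < (i : ℕ)) → T i j = 0

def HasTridiagLUFactor (n M : ℕ) (y : Matrix (Fin n) (Fin n) ℝ) : Prop :=
  ∃ T : Matrix (Fin n) (Fin n) ℝ, IsLU n M T ∧ IsTridiag T ∧ y = T * Tᵀ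

section CholeskyStep

variable {n : ℕ}

def choleskyCol (y : Matrix (Fin (n + 1)) (Fin (n + 1)) ℝ) : Fin (n + 1) → ℝ :=
  fun i => y i 0 / √(y 0 0)

def schurComplement (y : Matrix (Fin (n + 1)) (Fin (n + 1)) ℝ) : Matrix (Fin n) (Fin n) ℝ :=
  (y - vecMulVec (choleskyCol y) (choleskyCol y)).submatrix Fin.succ Fin.succ

def bordered (v : Fin (n + 1) → ℝ) (T : Matrix (Fin n) (Fin n) ℝ) :
    Matrix (Fin (n + 1)) (Fin (n + 1)) ℝ :=
  Matrix.of fun i => Fin.cons (v i) ((Fin.cons 0 T : Fin (n + 1) → Fin n → ℝ) i)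

@[simp] lemma bordered_apply_zero (v : Fin (n + 1) → ℝ) (T : Matrix (Fin n) (Fin n) ℝ)
    (i : Fin (n + 1)) : bordered v T i 0 = v i := rfl

@[simp] lemma bordered_zero_succ (v : Fin (n + 1) → ℝ) (T : Matrix (Fin n) (Fin n) ℝ)
    (j : Fin n) : bordered v T 0 j.succ = 0 := rfl

@[simp] lemma bordered_succ_succ (v : Fin (n + 1) → ℝ) (T : Matrix (Fin n) (Fin n) ℝ)
    (i j : Fin n) : bordered v T i.succ j.succ = T i j := rfl

variable {y : Matrix (Fin (n + 1)) (Fin (n + 1)) ℝ}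

lemma sub_vecMulVec_choleskyCol_apply_zero_right (ha : 0 < y 0 0) (i : Fin (n + 1)) :
    (y - vecMulVec (choleskyCol y) (choleskyCol y)) i 0 = 0 := by
  simp only [Matrix.sub_apply, vecMulVec_apply, choleskyCol]
  rw [div_mul_div_comm, Real.mul_self_sqrt ha.le,
    mul_div_assoc, div_self ha.ne', mul_one, sub_self]

lemma sub_vecMulVec_choleskyCol_apply_zero_left (hs : y.IsHermitian) (ha : 0 < y 0 0)
    (j : Fin (n + 1)) :
    (y - vecMulVec (choleskyCol y) (choleskyCol y)) 0 j = 0 := by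
  have h := sub_vecMulVec_choleskyCol_apply_zero_right ha j
  rw [Matrix.sub_apply, ← hs.apply j 0, star_trivial] at h
  simpa only [Matrix.sub_apply, vecMulVec_apply, mul_comm] using h

lemma dotProduct_mulVec_cons {R : Matrix (Fin (n + 1)) (Fin (n + 1)) ℝ}
    (hrow : ∀ j, R 0 j = 0) (hcol : ∀ i, R i 0 = 0) (t : ℝ) (x : Fin n → ℝ) :
    Fin.cons t x ⬝ᵥ R *ᵥ Fin.cons t x = x ⬝ᵥ R.submatrix Fin.succ Fin.succ *ᵥ x := by
  simp [dotProduct, mulVec, Fin.sum_univ_succ, hrow, hcol]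

lemma posDef_schurComplement (hy : y.PosDef) : (schurComplement y).PosDef := by
  set v := choleskyCol y
  have ha : 0 < y 0 0 := hy.diag_pos
  have hv0 : v 0 ≠ 0 := (div_pos ha (Real.sqrt_pos.2 ha)).ne'
  have hvv : (vecMulVec v v).IsHermitian := by simp [IsHermitian]
  refine .of_dotProduct_mulVec_pos ((hy.1.sub hvv).submatrix _) fun x hx => ?_
  -- the first coordinate of `xt` is chosen to make `xt` orthogonal to `v`
  set xt : Fin (n + 1) → ℝ := Fin.cons (-(∑ j, v j.succ * x j) / v 0) x
  have hxt : xt ≠ 0 := fun h => hx (funext fun j => by simpa [xt] using congrFun h j.succ)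
  have hvxt : v ⬝ᵥ xt = 0 := by
    simp only [xt, dotProduct, Fin.sum_univ_succ, Fin.cons_zero, Fin.cons_succ]
    field_simp
    ring
  have hquad : star x ⬝ᵥ schurComplement y *ᵥ x = star xt ⬝ᵥ y *ᵥ xt := by
    rw [star_trivial, star_trivial, schurComplement, ← dotProduct_mulVec_cons
      (sub_vecMulVec_choleskyCol_apply_zero_left hy.1 ha)
      (sub_vecMulVec_choleskyCol_apply_zero_right ha)]
    change xt ⬝ᵥ _ *ᵥ xt = _
    rw [sub_mulVec, vecMulVec_mulVec, hvxt]
    simp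
  exact hquad ▸ hy.dotProduct_mulVec_pos hxt

lemma bordered_choleskyCol_mul_transpose (hy : y.PosDef) {T : Matrix (Fin n) (Fin n) ℝ}
    (hT : schurComplement y = T * Tᵀ) :
    bordered (choleskyCol y) T * (bordered (choleskyCol y) T)ᵀ = y := by
  have ha : 0 < y 0 0 := hy.diag_pos
  set v := choleskyCol y
  have hsplit : ∀ i j, y i j = v i * v j + (y - vecMulVec v v) i j := fun i j => by
    simp [vecMulVec_apply]
  ext i j
  rw [hsplit, mul_apply, Fin.sum_univ_succ]
  congr 1
  induction i using Fin.cases with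
  | zero => simp [v, sub_vecMulVec_choleskyCol_apply_zero_left hy.1 ha]
  | succ i =>
    induction j using Fin.cases with
    | zero => simp [v, sub_vecMulVec_choleskyCol_apply_zero_right ha]
    | succ j => simpa [mul_apply, schurComplement] using (congrFun₂ hT i j).symm

end CholeskyStep

section Sparsity

variable {n M : ℕ}

lemma IsTridiag.choleskyCol_eq_zero {y : Matrix (Fin (n + 1)) (Fin (n + 1)) ℝ}
    (ht : IsTridiag y) (i : Fin (n + 1)) (hi : 1 < (i : ℕ)) : choleskyCol y i = 0 := by
  simp [choleskyCol, ht i 0 (by simp only [Fin.val_zero]; omega)]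

lemma IsTridiag.schurComplement {y : Matrix (Fin (n + 1)) (Fin (n + 1)) ℝ}
    (ht : IsTridiag y) : IsTridiag (schurComplement y) := by
  intro i j hij
  have hcol : choleskyCol y i.succ = 0 ∨ choleskyCol y j.succ = 0 := by
    rcases hij with h | h
    · exact .inr (ht.choleskyCol_eq_zero _ (by simp only [Fin.val_succ]; omega))
    · exact .inl (ht.choleskyCol_eq_zero _ (by simp only [Fin.val_succ]; omega))
  simp only [_root_.schurComplement, submatrix_apply, Matrix.sub_apply, vecMulVec_apply,
    ht i.succ j.succ (by simp only [Fin.val_succ]; omega)]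
  rcases hcol with h | h <;> simp [h]

lemma bordered_apply_eq_zero {v : Fin (n + 1) → ℝ} {T : Matrix (Fin n) (Fin n) ℝ}
    {i j : Fin (n + 1)} (hv : j = 0 → v i = 0)
    (hT : ∀ i' j' : Fin n, i = i'.succ → j = j'.succ → T i' j' = 0) : bordered v T i j = 0 := by
  induction j using Fin.cases with
  | zero => simpa using hv rfl
  | succ j =>
    induction i using Fin.cases with
    | zero => simp
    | succ i => simpa using hT i j rfl rfl

lemma IsTridiag.bordered {v : Fin (n + 1) → ℝ} {T : Matrix (Fin n) (Fin n) ℝ}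
    (hv : ∀ i : Fin (n + 1), 1 < (i : ℕ) → v i = 0) (hT : IsTridiag T) :
    IsTridiag (bordered v T) := by
  intro i j hij
  refine bordered_apply_eq_zero (fun hj => hv i ?_) fun i' j' hi hj => hT i' j' ?_
  · subst hj
    simp only [Fin.val_zero] at hij
    omega
  · subst hi hj
    simpa using hij

lemma IsLU.bordered {v : Fin (n + 1) → ℝ} {T : Matrix (Fin n) (Fin n) ℝ} (hM : 2 ≤ M)
    (hv : ∀ i : Fin (n + 1), 1 < (i : ℕ) → v i = 0) (hT : IsLU n (M - 1) T) :
    IsLU (n + 1) M (bordered v T) := by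
  intro i j hij
  refine bordered_apply_eq_zero (fun hj => hv i ?_) fun i' j' hi hj => hT i' j' ?_
  · subst hj
    simp only [Fin.val_zero] at hij
    omega
  · subst hi hj
    simp only [Fin.val_succ] at hij
    omega

lemma IsTridiag.submatrix_rev {T : Matrix (Fin n) (Fin n) ℝ} (hT : IsTridiag T) :
    IsTridiag (T.submatrix Fin.rev Fin.rev) := fun i j hij =>
  hT _ _ (by have := i.2; have := j.2; simp only [Fin.val_rev]; omega)

lemma IsLU.submatrix_rev {T : Matrix (Fin n) (Fin n) ℝ} (hM : M ≤ 1) (hT : IsLU n (n + 1) T) :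
    IsLU n M (T.submatrix Fin.rev Fin.rev) := fun i j hij =>
  hT _ _ (by have := i.2; have := j.2; simp only [Fin.val_rev]; omega)

end Sparsity

section Factorization

variable {n M : ℕ}

lemma HasTridiagLUFactor.of_submatrix_rev {y : Matrix (Fin n) (Fin n) ℝ} (hM : M ≤ 1)
    (h : HasTridiagLUFactor n (n + 1) (y.submatrix Fin.rev Fin.rev)) :
    HasTridiagLUFactor n M y := by
  obtain ⟨T, hLU, ht, hy⟩ := h
  refine ⟨T.submatrix Fin.rev Fin.rev, hLU.submatrix_rev hM, ht.submatrix_rev, ?_⟩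
  rw [transpose_submatrix, ← submatrix_mul _ _ _ _ _ Fin.rev_bijective, ← hy]
  ext
  simp

lemma HasTridiagLUFactor.of_schurComplement {y : Matrix (Fin (n + 1)) (Fin (n + 1)) ℝ}
    (hM : 2 ≤ M) (hy : y.PosDef) (ht : IsTridiag y)
    (h : HasTridiagLUFactor n (M - 1) (schurComplement y)) : HasTridiagLUFactor (n + 1) M y := by
  obtain ⟨T, hLU, htT, hT⟩ := h
  exact ⟨bordered (choleskyCol y) T, hLU.bordered hM ht.choleskyCol_eq_zero,
    htT.bordered ht.choleskyCol_eq_zero, (bordered_choleskyCol_mul_transpose hy hT).symm⟩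

theorem hasTridiagLUFactor_of_posDef :
    ∀ {n : ℕ} (M : ℕ) {y : Matrix (Fin n) (Fin n) ℝ}, y.PosDef → IsTridiag y →
      HasTridiagLUFactor n M y
  | 0, _, _, _, _ => ⟨0, fun i => i.elim0, fun i => i.elim0, Subsingleton.elim _ _⟩
  | n + 1, M, y, hy, ht => by
    have peel : ∀ M (y : Matrix (Fin (n + 1)) (Fin (n + 1)) ℝ), 2 ≤ M → y.PosDef →
        IsTridiag y → HasTridiagLUFactor (n + 1) M y := fun M y hM hy ht =>
      .of_schurComplement hM hy ht
        (hasTridiagLUFactor_of_posDef _ (posDef_schurComplement hy) ht.schurComplement)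
    rcases le_or_gt 2 M with hM | hM
    · exact peel M y hM hy ht
    · exact .of_submatrix_rev (by omega)
        (peel _ _ (by omega) (hy.submatrix Fin.rev_injective) ht.submatrix_rev)

end Factorization

theorem stmt17_general (n : ℕ) (M : ℕ) (y : Matrix (Fin n) (Fin n) ℝ) (hy : y ∈ PG n) :
    ∃ T : Matrix (Fin n) (Fin n) ℝ, IsLU n M T ∧
      (∀ i j : Fin n, ((i : ℕ) + 1 < (j : ℕ) ∨ (j : ℕ) + 1 < (i : ℕ)) → T i j = 0) ∧
      y = T * Tᵀ :=
  hasTridiagLUFactor_of_posDef M hy.2 hy.1.2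

/-- Every `y ∈ P_{A_n}` admits a factorization `y = T Tᵀ` with `T` an LU(M)-triangular
matrix satisfying `T_{ij} = 0` whenever `|i - j| > 1`. -/
theorem stmt17 (n : ℕ) (hn : 1 ≤ n) (M : ℕ) (hM1 : 1 ≤ M) (hMn : M ≤ n)
    (y : Matrix (Fin n) (Fin n) ℝ) (hy : y ∈ PG n) :
    ∃ T : Matrix (Fin n) (Fin n) ℝ, IsLU n M T ∧
      (∀ i j : Fin n, ((i : ℕ) + 1 < (j : ℕ) ∨ (j : ℕ) + 1 < (i : ℕ)) → T i j = 0) ∧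
      y = T * Tᵀ :=
  stmt17_general n M y hy
end
end
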